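/- Let X, Y, A be finitely valued random variables with A - X - Y a Markov chain, and let A take values in {1,...,K}. For each j define Y_j = Y if A = j and Y_j = e (an erasure symbol not in the range of Y) otherwise. Then the sum over j of I(X; Y_j | A) equals I(X; Y | A), and hence is at most I(X;Y). -/

import Mathlib

open Finset

section Defs

/-- Probability of the event `X = x` under the mass function `μ`. -/
noncomputable def pr {Ω : Type*} [Fintype Ω] (μ : Ω → ℝ) {α : Type*} [Fintype α]
    [DecidableEq α] (X : Ω → α) (x : α) : ℝ :=
  ∑ ω, if X ω = x then μ ω else 0

/-- Shannon entropy (base 2) of a finitely valued random variable. -/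
noncomputable def ent {Ω : Type*} [Fintype Ω] (μ : Ω → ℝ) {α : Type*} [Fintype α]
    [DecidableEq α] (X : Ω → α) : ℝ :=
  - ∑ x, pr μ X x * Real.logb 2 (pr μ X x)

/-- Conditional entropy `H(X|Y) = H(X,Y) - H(Y)`. -/
noncomputable def condEnt {Ω : Type*} [Fintype Ω] (μ : Ω → ℝ) {α β : Type*}
    [Fintype α] [DecidableEq α] [Fintype β] [DecidableEq β]
    (X : Ω → α) (Y : Ω → β) : ℝ :=
  ent μ (fun ω => (X ω, Y ω)) - ent μ Y

/-- Mutual information `I(X;Y) = H(X) - H(X|Y)`. -/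
noncomputable def mi {Ω : Type*} [Fintype Ω] (μ : Ω → ℝ) {α β : Type*}
    [Fintype α] [DecidableEq α] [Fintype β] [DecidableEq β]
    (X : Ω → α) (Y : Ω → β) : ℝ :=
  ent μ X - condEnt μ X Y

/-- Conditional mutual information `I(X;Y|Z) = H(X|Z) - H(X|Y,Z)`. -/
noncomputable def cmi {Ω : Type*} [Fintype Ω] (μ : Ω → ℝ) {α β γ : Type*}
    [Fintype α] [DecidableEq α] [Fintype β] [DecidableEq β] [Fintype γ] [DecidableEq γ]
    (X : Ω → α) (Y : Ω → β) (Z : Ω → γ) : ℝ :=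
  condEnt μ X Z - condEnt μ X (fun ω => (Y ω, Z ω))

/-- `μ` is a probability mass function on the finite sample space `Ω`. -/
def IsProb {Ω : Type*} [Fintype Ω] (μ : Ω → ℝ) : Prop :=
  (∀ ω, 0 ≤ μ ω) ∧ ∑ ω, μ ω = 1

/-- `A` and `Y` are conditionally independent given `X` (Markov chain `A - X - Y`). -/
def CondIndep {Ω : Type*} [Fintype Ω] (μ : Ω → ℝ) {α β γ : Type*}
    [Fintype α] [DecidableEq α] [Fintype β] [DecidableEq β] [Fintype γ] [DecidableEq γ]
    (A : Ω → α) (Y : Ω → β) (X : Ω → γ) : Prop :=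
  ∀ a y x, pr μ (fun ω => (A ω, Y ω, X ω)) (a, y, x) * pr μ X x =
    pr μ (fun ω => (A ω, X ω)) (a, x) * pr μ (fun ω => (Y ω, X ω)) (y, x)

/-- Binary entropy function (base 2). -/
noncomputable def H2 (p : ℝ) : ℝ :=
  -(p * Real.logb 2 p) - (1 - p) * Real.logb 2 (1 - p)

end Defs

/-!
Every entropy is an expectation of a log-probability, `H(X) = -E[log₂ p(X)]`, so every
information quantity is the expectation of a pointwise density. The pointwise conditional mutual
information of `Y_j` vanishes off the event `A = j`, where `Y_j` is constant, and agrees with that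
of `Y` on it; hence the densities of the `Y_j` add up to that of `Y`. For the inequality, the Markov
factorisation `p(a,y,x) p(x) = p(a,x) p(y,x)` gives `I(X;Y|A) = I(X;Y) - I(Y;A)`, and
`I(Y;A) ≥ 0` by `log t ≤ t - 1`.
-/

section PointwiseInformation

variable {Ω α β γ : Type*} [Fintype Ω] [Fintype α] [DecidableEq α] [Fintype β] [DecidableEq β]
  [Fintype γ] [DecidableEq γ] {μ : Ω → ℝ}

noncomputable def logPr (μ : Ω → ℝ) (X : Ω → α) (ω : Ω) : ℝ :=
  Real.logb 2 (pr μ X (X ω))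

noncomputable def pmi (μ : Ω → ℝ) (X : Ω → α) (Y : Ω → β) (ω : Ω) : ℝ :=
  logPr μ (fun ω => (X ω, Y ω)) ω - logPr μ X ω - logPr μ Y ω

noncomputable def condPMI (μ : Ω → ℝ) (X : Ω → α) (Y : Ω → β) (Z : Ω → γ) (ω : Ω) : ℝ :=
  logPr μ (fun ω => (X ω, Y ω, Z ω)) ω - logPr μ (fun ω => (Y ω, Z ω)) ω
    - logPr μ (fun ω => (X ω, Z ω)) ω + logPr μ Z ω

lemma sum_pr_mul (X : Ω → α) (g : α → ℝ) :
    ∑ x, pr μ X x * g x = ∑ ω, μ ω * g (X ω) := by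
  simp only [pr, sum_mul, ite_mul, zero_mul]
  rw [sum_comm]
  simp

lemma sum_pr (X : Ω → α) : ∑ x, pr μ X x = ∑ ω, μ ω := by
  simpa using sum_pr_mul (μ := μ) X fun _ => 1

lemma pr_nonneg (hμ : ∀ ω, 0 ≤ μ ω) (X : Ω → α) (x : α) : 0 ≤ pr μ X x :=
  sum_nonneg fun ω _ => by split_ifs <;> simp [hμ ω]

lemma pr_pos (hμ : ∀ ω, 0 ≤ μ ω) (X : Ω → α) {ω : Ω} (hω : 0 < μ ω) :
    0 < pr μ X (X ω) :=
  hω.trans_le <| by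
    simpa [pr] using single_le_sum (f := fun ω' => if X ω' = X ω then μ ω' else 0)
      (fun ω' _ => by split_ifs <;> simp [hμ ω']) (mem_univ ω)

lemma logPr_congr {X : Ω → α} {X' : Ω → β} {ω : Ω}
    (h : ∀ ω', X ω' = X ω ↔ X' ω' = X' ω) : logPr μ X ω = logPr μ X' ω := by
  simp only [logPr, pr, h]

lemma ent_eq_sum_logPr (X : Ω → α) : ent μ X = -∑ ω, μ ω * logPr μ X ω := by
  rw [ent, sum_pr_mul X fun x => Real.logb 2 (pr μ X x)]
  rfl

lemma mi_eq_sum_pmi (X : Ω → α) (Y : Ω → β) : mi μ X Y = ∑ ω, μ ω * pmi μ X Y ω := by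
  simp only [mi, condEnt, ent_eq_sum_logPr, pmi, mul_sub, sum_sub_distrib]
  ring

lemma cmi_eq_sum_condPMI (X : Ω → α) (Y : Ω → β) (Z : Ω → γ) :
    cmi μ X Y Z = ∑ ω, μ ω * condPMI μ X Y Z ω := by
  simp only [cmi, condEnt, ent_eq_sum_logPr, condPMI, mul_add, mul_sub, sum_add_distrib,
    sum_sub_distrib]
  ring

/-- The paper's `Y_j`, with `none` as the erasure symbol `e`. -/
def erasure (A : Ω → γ) (j : γ) (Y : Ω → β) (ω : Ω) : Option β :=
  if A ω = j then some (Y ω) else none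

lemma condPMI_erasure (X : Ω → α) (Y : Ω → β) (A : Ω → γ) (j : γ) (ω : Ω) :
    condPMI μ X (erasure A j Y) A ω = if A ω = j then condPMI μ X Y A ω else 0 := by
  by_cases hj : A ω = j
  · have hXYA : logPr μ (fun ω => (X ω, erasure A j Y ω, A ω)) ω
        = logPr μ (fun ω => (X ω, Y ω, A ω)) ω :=
      logPr_congr fun _ => by grind [erasure]
    have hYA : logPr μ (fun ω => (erasure A j Y ω, A ω)) ω = logPr μ (fun ω => (Y ω, A ω)) ω :=
      logPr_congr fun _ => by grind [erasure]
    rw [if_pos hj, condPMI, condPMI, hXYA, hYA]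
  · have hXYA : logPr μ (fun ω => (X ω, erasure A j Y ω, A ω)) ω
        = logPr μ (fun ω => (X ω, A ω)) ω :=
      logPr_congr fun _ => by grind [erasure]
    have hYA : logPr μ (fun ω => (erasure A j Y ω, A ω)) ω = logPr μ A ω :=
      logPr_congr fun _ => by grind [erasure]
    rw [if_neg hj, condPMI, hXYA, hYA]
    ring

lemma sum_cmi_erasure (X : Ω → α) (Y : Ω → β) (A : Ω → γ) :
    ∑ j, cmi μ X (erasure A j Y) A = cmi μ X Y A := by
  simp only [cmi_eq_sum_condPMI, condPMI_erasure, mul_ite, mul_zero]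
  rw [sum_comm]
  simp

lemma logPr_add_of_condIndep (hμ : ∀ ω, 0 ≤ μ ω) {A : Ω → γ} {Y : Ω → β} {X : Ω → α}
    (hM : CondIndep μ A Y X) {ω : Ω} (hω : 0 < μ ω) :
    logPr μ (fun ω => (A ω, Y ω, X ω)) ω + logPr μ X ω
      = logPr μ (fun ω => (A ω, X ω)) ω + logPr μ (fun ω => (Y ω, X ω)) ω := by
  simp only [logPr]
  rw [← Real.logb_mul (pr_pos hμ _ hω).ne' (pr_pos hμ _ hω).ne',
    ← Real.logb_mul (pr_pos hμ _ hω).ne' (pr_pos hμ _ hω).ne', hM]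

lemma cmi_eq_mi_sub_mi_of_condIndep (hμ : ∀ ω, 0 ≤ μ ω) {A : Ω → γ} {Y : Ω → β} {X : Ω → α}
    (hM : CondIndep μ A Y X) : cmi μ X Y A = mi μ X Y - mi μ Y A := by
  rw [cmi_eq_sum_condPMI, mi_eq_sum_pmi, mi_eq_sum_pmi, ← sum_sub_distrib]
  refine sum_congr rfl fun ω _ => ?_
  rcases (hμ ω).eq_or_lt with hω | hω
  · simp [← hω]
  have hAYX : logPr μ (fun ω => (A ω, Y ω, X ω)) ω = logPr μ (fun ω => (X ω, Y ω, A ω)) ω :=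
    logPr_congr fun _ => by simp only [Prod.mk.injEq]; tauto
  have hAX : logPr μ (fun ω => (A ω, X ω)) ω = logPr μ (fun ω => (X ω, A ω)) ω :=
    logPr_congr fun _ => by simp only [Prod.mk.injEq]; tauto
  have hYX : logPr μ (fun ω => (Y ω, X ω)) ω = logPr μ (fun ω => (X ω, Y ω)) ω :=
    logPr_congr fun _ => by simp only [Prod.mk.injEq]; tauto
  have hMω := logPr_add_of_condIndep hμ hM hω
  rw [hAYX, hAX, hYX] at hMω
  rw [← mul_sub, condPMI, pmi, pmi]
  congr 1
  linarith

lemma sum_pr_mul_pr_div_pr_le_one (hμ : IsProb μ) (X : Ω → α) (Y : Ω → β) :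
    ∑ ω, μ ω * (pr μ X (X ω) * pr μ Y (Y ω) / pr μ (fun ω => (X ω, Y ω)) (X ω, Y ω)) ≤ 1 := by
  set P := pr μ (fun ω => (X ω, Y ω))
  rw [← sum_pr_mul (fun ω => (X ω, Y ω)) fun v => pr μ X v.1 * pr μ Y v.2 / P v]
  calc ∑ v, P v * (pr μ X v.1 * pr μ Y v.2 / P v)
      ≤ ∑ v : α × β, pr μ X v.1 * pr μ Y v.2 := by
        refine sum_le_sum fun v _ => ?_
        have hPv : 0 ≤ P v := pr_nonneg hμ.1 _ v
        rcases hPv.eq_or_lt with hv | hv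
        · rw [← hv, zero_mul]
          exact mul_nonneg (pr_nonneg hμ.1 _ _) (pr_nonneg hμ.1 _ _)
        · exact (mul_div_cancel₀ _ hv.ne').le
    _ = 1 := by rw [Fintype.sum_prod_type, ← sum_mul_sum, sum_pr, sum_pr, hμ.2, one_mul]

lemma mi_nonneg (hμ : IsProb μ) (X : Ω → α) (Y : Ω → β) : 0 ≤ mi μ X Y := by
  set q : Ω → ℝ := fun ω =>
    pr μ X (X ω) * pr μ Y (Y ω) / pr μ (fun ω => (X ω, Y ω)) (X ω, Y ω)
  have hlog2 : 0 < Real.log 2 := Real.log_pos one_lt_two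
  have hpoint : ∀ ω, μ ω * -pmi μ X Y ω ≤ μ ω * (q ω - 1) / Real.log 2 := by
    intro ω
    rcases (hμ.1 ω).eq_or_lt with hω | hω
    · simp [← hω]
    have hX := pr_pos hμ.1 X hω
    have hY := pr_pos hμ.1 Y hω
    have hXY := pr_pos hμ.1 (fun ω => (X ω, Y ω)) hω
    have hq : -pmi μ X Y ω = Real.logb 2 (q ω) := by
      simp only [pmi, logPr, q]
      rw [Real.logb_div (mul_pos hX hY).ne' hXY.ne', Real.logb_mul hX.ne' hY.ne']
      ring
    rw [hq, mul_div_assoc]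
    gcongr
    rw [Real.logb, div_le_div_iff_of_pos_right hlog2]
    exact Real.log_le_sub_one_of_pos (by positivity)
  have hsum : ∑ ω, μ ω * -pmi μ X Y ω ≤ 0 :=
    calc ∑ ω, μ ω * -pmi μ X Y ω ≤ ∑ ω, μ ω * (q ω - 1) / Real.log 2 :=
          sum_le_sum fun ω _ => hpoint ω
      _ = (∑ ω, μ ω * q ω - ∑ ω, μ ω) / Real.log 2 := by
          rw [← sum_div, ← sum_sub_distrib]
          simp only [mul_sub, mul_one]
      _ ≤ 0 := div_nonpos_of_nonpos_of_nonneg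
          (by linarith [hμ.2, sum_pr_mul_pr_div_pr_le_one hμ X Y]) hlog2.le
  rw [mi_eq_sum_pmi]
  simpa only [mul_neg, sum_neg_distrib, neg_nonpos] using hsum

end PointwiseInformation

theorem stmt1_general {Ω α β : Type*} [Fintype Ω] [Fintype α] [DecidableEq α]
    [Fintype β] [DecidableEq β] {K : ℕ}
    (μ : Ω → ℝ) (hμ : IsProb μ) (X : Ω → α) (Y : Ω → β) (A : Ω → Fin K)
    (hMarkov : CondIndep μ A Y X) :
    (∑ j : Fin K,
        cmi μ X (fun ω => if A ω = j then some (Y ω) else (none : Option β)) A)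
      = cmi μ X Y A ∧ cmi μ X Y A ≤ mi μ X Y := by
  refine ⟨sum_cmi_erasure X Y A, ?_⟩
  rw [cmi_eq_mi_sub_mi_of_condIndep hμ.1 hMarkov]
  linarith [mi_nonneg hμ Y A]

/-- With `A - X - Y` Markov and erasure side informations
`Y_j = Y` if `A = j`, `= e` (i.e. `none`) otherwise, the sum over `j` of
`I(X;Y_j|A)` equals `I(X;Y|A)`, which is at most `I(X;Y)`. -/
theorem stmt1 {Ω α β : Type*} [Fintype Ω] [Fintype α] [DecidableEq α]
    [Fintype β] [DecidableEq β] {K : ℕ} (hK : 1 ≤ K)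
    (μ : Ω → ℝ) (hμ : IsProb μ) (X : Ω → α) (Y : Ω → β) (A : Ω → Fin K)
    (hMarkov : CondIndep μ A Y X) :
    (∑ j : Fin K,
        cmi μ X (fun ω => if A ω = j then some (Y ω) else (none : Option β)) A)
      = cmi μ X Y A ∧ cmi μ X Y A ≤ mi μ X Y :=
  stmt1_general μ hμ X Y A hMarkov
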